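/- arXiv:2103.10433 — 3 statements merged into one kernel-verified Lean document; each statement's English description precedes it below -/
import Mathlib

section
/- In the Gibbs model without covariates, for any species i, the quantity log P(1,…,1) − log P(x^{(i)}) + log P(0,…,0) − log P(y^{(i)}) equals (β_{l,co-abs} + β_{l,co-pres})·deg_{G*}(i), where x^{(i)} is the configuration with only species i absent and y^{(i)} is the configuration with only species i present. In particular, if some vertex has positive degree, β_{l,co-abs} + β_{l,co-pres} is uniquely determined by the distribution. -/
open Finset Real

noncomputable def ind (b : Bool) : ℝ := if b then 1 else 0

noncomputable def edgeCP {V : Type*} [Fintype V] (G : SimpleGraph V) [DecidableRel G.Adj]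
    (x : V → Bool) : ℝ :=
  ∑ e ∈ G.edgeFinset, Sym2.lift ⟨fun i j => ind (x i) * ind (x j), fun i j => by ring⟩ e

noncomputable def edgeCA {V : Type*} [Fintype V] (G : SimpleGraph V) [DecidableRel G.Adj]
    (x : V → Bool) : ℝ :=
  ∑ e ∈ G.edgeFinset,
    Sym2.lift ⟨fun i j => (1 - ind (x i)) * (1 - ind (x j)), fun i j => by ring⟩ e

noncomputable def energy {V : Type*} [Fintype V] (G : SimpleGraph V) [DecidableRel G.Adj]
    (α : V → ℝ) (bcp bca : ℝ) (x : V → Bool) : ℝ :=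
  (∑ i, α i * ind (x i)) + bcp * edgeCP G x + bca * edgeCA G x

noncomputable def Zconst {V : Type*} [Fintype V] [DecidableEq V] (G : SimpleGraph V)
    [DecidableRel G.Adj] (α : V → ℝ) (bcp bca : ℝ) : ℝ :=
  ∑ x : V → Bool, Real.exp (energy G α bcp bca x)

noncomputable def gibbs {V : Type*} [Fintype V] [DecidableEq V] (G : SimpleGraph V)
    [DecidableRel G.Adj] (α : V → ℝ) (bcp bca : ℝ) (x : V → Bool) : ℝ :=
  Real.exp (energy G α bcp bca x) / Zconst G α bcp bca

lemma deg_sum {V : Type*} [Fintype V] [DecidableEq V] (G : SimpleGraph V) [DecidableRel G.Adj]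
    (i : V) : ∑ e ∈ G.edgeFinset, (if i ∈ e then (1:ℝ) else 0) = G.degree i := by
  rw [Finset.sum_boole]
  congr 1
  rw [← SimpleGraph.card_incidenceFinset_eq_degree, SimpleGraph.incidenceFinset_eq_filter]

lemma Z_pos {V : Type*} [Fintype V] [DecidableEq V] (G : SimpleGraph V) [DecidableRel G.Adj]
    (α : V → ℝ) (bcp bca : ℝ) : 0 < Zconst G α bcp bca :=
  Finset.sum_pos (fun x _ => Real.exp_pos _) ⟨fun _ => true, Finset.mem_univ _⟩

lemma log_gibbs {V : Type*} [Fintype V] [DecidableEq V] (G : SimpleGraph V) [DecidableRel G.Adj]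
    (α : V → ℝ) (bcp bca : ℝ) (x : V → Bool) :
    Real.log (gibbs G α bcp bca x) = energy G α bcp bca x - Real.log (Zconst G α bcp bca) := by
  rw [gibbs, Real.log_div (Real.exp_ne_zero _) (Z_pos G α bcp bca).ne', Real.log_exp]

/-- for any species `i`,
`log P(1,…,1) − log P(x⁽ⁱ⁾) + log P(0,…,0) − log P(y⁽ⁱ⁾) = (β_ca + β_cp)·deg(i)`,
where `x⁽ⁱ⁾` has only `i` absent and `y⁽ⁱ⁾` has only `i` present.  In particular, if some
vertex has positive degree then `β_ca + β_cp` is uniquely determined by the distribution. -/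
theorem identifiability_beta_sum {V : Type*} [Fintype V] [DecidableEq V]
    (G : SimpleGraph V) [DecidableRel G.Adj] (α : V → ℝ) (bcp bca : ℝ) (i : V) :
    Real.log (gibbs G α bcp bca (fun _ => true))
      - Real.log (gibbs G α bcp bca (Function.update (fun _ => true) i false))
      + Real.log (gibbs G α bcp bca (fun _ => false))
      - Real.log (gibbs G α bcp bca (Function.update (fun _ => false) i true)) =
      (bca + bcp) * (G.degree i : ℝ) := by
  simp only [log_gibbs]
  have hα : (∑ j, α j * ind true)
      - (∑ j, α j * ind (Function.update (fun _ => true) i false j))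
      + (∑ j, α j * ind false)
      - (∑ j, α j * ind (Function.update (fun _ => false) i true j)) = 0 := by
    rw [← Finset.sum_sub_distrib, ← Finset.sum_add_distrib, ← Finset.sum_sub_distrib]
    refine Finset.sum_eq_zero fun j _ => ?_
    by_cases h : j = i <;> simp [ind, Function.update_apply, h]
  have hcp : edgeCP G (fun _ => true) - edgeCP G (Function.update (fun _ => true) i false)
      + edgeCP G (fun _ => false) - edgeCP G (Function.update (fun _ => false) i true)
      = (G.degree i : ℝ) := by
    rw [← deg_sum G i, edgeCP, edgeCP, edgeCP, edgeCP,
      ← Finset.sum_sub_distrib, ← Finset.sum_add_distrib, ← Finset.sum_sub_distrib]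
    refine Finset.sum_congr rfl fun e he => ?_
    induction e using Sym2.ind with
    | _ a b =>
      have hab : a ≠ b := G.ne_of_adj (by simpa using he)
      simp only [Sym2.lift_mk, Sym2.mem_iff, ind, Function.update_apply]
      rcases eq_or_ne a i with ha | ha <;> rcases eq_or_ne b i with hb | hb
      · exact absurd (ha.trans hb.symm) hab
      · subst ha; simp [hb, Ne.symm hb]
      · subst hb; simp [ha, Ne.symm ha]
      · simp [ha, hb, Ne.symm ha, Ne.symm hb]
  have hca : edgeCA G (fun _ => true) - edgeCA G (Function.update (fun _ => true) i false)
      + edgeCA G (fun _ => false) - edgeCA G (Function.update (fun _ => false) i true)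
      = (G.degree i : ℝ) := by
    rw [← deg_sum G i, edgeCA, edgeCA, edgeCA, edgeCA,
      ← Finset.sum_sub_distrib, ← Finset.sum_add_distrib, ← Finset.sum_sub_distrib]
    refine Finset.sum_congr rfl fun e he => ?_
    induction e using Sym2.ind with
    | _ a b =>
      have hab : a ≠ b := G.ne_of_adj (by simpa using he)
      simp only [Sym2.lift_mk, Sym2.mem_iff, ind, Function.update_apply]
      rcases eq_or_ne a i with ha | ha <;> rcases eq_or_ne b i with hb | hb
      · exact absurd (ha.trans hb.symm) hab
      · subst ha; simp [hb, Ne.symm hb]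
      · subst hb; simp [ha, Ne.symm ha]
      · simp [ha, hb, Ne.symm ha, Ne.symm hb]
  simp only [energy]
  linear_combination hα + bcp * hcp + bca * hca
end

section
/- For any parameter ψ in the no-covariate model, and assuming G* has two vertices of different degrees, the equivalence class [ψ] = { ({a_i + γ·deg(i) − δ}, {a_l + δ}, {β_{l,cp} − γ}, {β_{l,ca} + γ}) : γ, δ ∈ ℝ } contains a unique representative whose species intercepts {a_i} have zero least-squares regression coefficients (slope and intercept) when regressed on the degrees {deg_{G*}(i)}. -/
open Finset Real

/-- The `(γ, δ)` transformation defining the equivalence class `[ψ]`. -/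
noncomputable def transform {V : Type*} [Fintype V] [DecidableEq V]
    (G : SimpleGraph V) [DecidableRel G.Adj] {L : ℕ}
    (p : (V → ℝ) × (Fin L → ℝ) × (Fin L → ℝ) × (Fin L → ℝ)) (γ δ : ℝ) :
    (V → ℝ) × (Fin L → ℝ) × (Fin L → ℝ) × (Fin L → ℝ) :=
  (fun i => p.1 i + γ * (G.degree i : ℝ) - δ,
   fun l => p.2.1 l + δ,
   fun l => p.2.2.1 l - γ,
   fun l => p.2.2.2 l + γ)

section Aux

lemma quad_aux (b c : ℝ) (hc : 0 ≤ c) (h : ∀ t : ℝ, 0 ≤ t^2 * c - 2*t*b) : b = 0 := by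
  have hc1 : (0:ℝ) < c + 1 := by linarith
  have h' := h (b / (c+1))
  have key : 0 ≤ b^2 * c / (c+1)^2 - 2 * b^2 / (c+1) := by
    have : (b / (c+1))^2 * c - 2*(b/(c+1))*b = b^2 * c / (c+1)^2 - 2 * b^2 / (c+1) := by
      field_simp
    linarith [h', this.symm ▸ h']
  have h2 : b^2 * c / (c+1)^2 - 2 * b^2 / (c+1) = -(b^2) * (c + 2) / (c+1)^2 := by
    field_simp; ring
  rw [h2] at key
  have hpos : (0:ℝ) < (c+1)^2 := by positivity
  have : 0 ≤ -(b^2) * (c+2) := by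
    by_contra hcon
    push_neg at hcon
    have := div_neg_of_neg_of_pos hcon hpos
    linarith
  nlinarith [sq_nonneg b]

lemma expand_sum {V : Type*} [Fintype V] (a d : V → ℝ) (γ δ : ℝ) :
    ∑ i, (a i - γ * d i - δ)^2 =
      ∑ i, a i ^2 - 2*γ*(∑ i, a i * d i) - 2*δ*(∑ i, a i) + ∑ i, (γ * d i + δ)^2 := by
  rw [Finset.mul_sum, Finset.mul_sum, ← Finset.sum_sub_distrib, ← Finset.sum_sub_distrib,
    ← Finset.sum_add_distrib]
  exact Finset.sum_congr rfl fun i _ => by ring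

lemma ls_char {V : Type*} [Fintype V] (a d : V → ℝ) :
    (∀ γ δ : ℝ, ∑ i, a i ^2 ≤ ∑ i, (a i - γ * d i - δ)^2) ↔
      ((∑ i, a i * d i) = 0 ∧ (∑ i, a i) = 0) := by
  constructor
  · intro h
    constructor
    · apply quad_aux _ (∑ i, d i ^2) (by positivity)
      intro t
      have := h t 0
      rw [expand_sum] at this
      have e : ∑ i, (t * d i + 0)^2 = t^2 * ∑ i, d i ^2 := by
        rw [Finset.mul_sum]; exact Finset.sum_congr rfl fun i _ => by ring
      rw [e] at this
      linarith
    · apply quad_aux _ (Fintype.card V : ℝ) (by positivity)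
      intro t
      have := h 0 t
      rw [expand_sum] at this
      have e : ∑ i, ((0:ℝ) * d i + t)^2 = t^2 * (Fintype.card V : ℝ) := by
        simp [Finset.sum_const, nsmul_eq_mul]; ring
      rw [e] at this
      linarith
  · rintro ⟨h1, h2⟩ γ δ
    rw [expand_sum, h1, h2]
    have : 0 ≤ ∑ i, (γ * d i + δ)^2 := by positivity
    linarith

lemma det_pos {V : Type*} [Fintype V] (d : V → ℝ) (i0 j0 : V) (hij : d i0 ≠ d j0) :
    0 < (Fintype.card V : ℝ) * (∑ i, d i ^2) - (∑ i, d i)^2 := by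
  have e : ∀ i : V, ∑ j, (d i - d j)^2 =
      (Fintype.card V : ℝ) * d i ^2 - 2 * d i * (∑ j, d j) + ∑ j, d j ^2 := by
    intro i
    have h1 : ∀ j : V, (d i - d j)^2 = d i ^2 - 2 * d i * d j + d j ^2 := fun j => by ring
    simp_rw [h1, Finset.sum_add_distrib, Finset.sum_sub_distrib, ← Finset.mul_sum,
      Finset.sum_const, nsmul_eq_mul, Finset.card_univ]
  have key : ∑ i, ∑ j, (d i - d j)^2 =
      2 * ((Fintype.card V : ℝ) * (∑ i, d i ^2) - (∑ i, d i)^2) := by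
    simp_rw [e]
    rw [Finset.sum_add_distrib, Finset.sum_sub_distrib, ← Finset.mul_sum,
      Finset.sum_const, nsmul_eq_mul, ← Finset.sum_mul, ← Finset.mul_sum, Finset.card_univ]
    ring
  have hpos : 0 < ∑ i, ∑ j, (d i - d j)^2 := by
    have hne : d i0 - d j0 ≠ 0 := sub_ne_zero.mpr hij
    apply Finset.sum_pos' (fun i _ => Finset.sum_nonneg fun j _ => sq_nonneg _)
    exact ⟨i0, Finset.mem_univ i0,
      Finset.sum_pos' (fun j _ => sq_nonneg _)
        ⟨j0, Finset.mem_univ j0, by positivity⟩⟩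
  linarith [key ▸ hpos]

lemma sum_shift {V : Type*} [Fintype V] (f d : V → ℝ) (γ δ : ℝ) :
    (∑ i, (f i + γ * d i - δ) = (∑ i, f i) + γ * (∑ i, d i) - δ * (Fintype.card V : ℝ)) ∧
    (∑ i, (f i + γ * d i - δ) * d i
      = (∑ i, f i * d i) + γ * (∑ i, d i ^2) - δ * (∑ i, d i)) := by
  constructor
  · rw [Finset.mul_sum, ← Finset.sum_add_distrib]
    rw [show δ * (Fintype.card V : ℝ) = ∑ _i : V, δ by
      simp [Finset.sum_const, nsmul_eq_mul]; ring]
    rw [← Finset.sum_sub_distrib]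
  · rw [Finset.mul_sum, Finset.mul_sum, ← Finset.sum_add_distrib, ← Finset.sum_sub_distrib]
    exact Finset.sum_congr rfl fun i _ => by ring

end Aux

/-- if `G*` has two vertices of different degrees, the equivalence class of
any parameter `ψ` contains a unique representative whose species intercepts have zero
least-squares regression coefficients when regressed on the degrees. -/

theorem unique_representative {V : Type*} [Fintype V] [DecidableEq V]
    (G : SimpleGraph V) [DecidableRel G.Adj] {L : ℕ}
    (ψ : (V → ℝ) × (Fin L → ℝ) × (Fin L → ℝ) × (Fin L → ℝ))
    (hdeg : ∃ i j : V, G.degree i ≠ G.degree j) :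
    ∃! p : (V → ℝ) × (Fin L → ℝ) × (Fin L → ℝ) × (Fin L → ℝ),
      (∃ γ δ : ℝ, p = transform G ψ γ δ) ∧
      (∀ γ δ : ℝ,
        ∑ i : V, (p.1 i) ^ 2 ≤ ∑ i : V, (p.1 i - γ * (G.degree i : ℝ) - δ) ^ 2) := by
  obtain ⟨i0, j0, hij⟩ := hdeg
  set d : V → ℝ := fun i => (G.degree i : ℝ) with hdd
  have hdij : d i0 ≠ d j0 := fun h => hij (Nat.cast_injective h)
  set n : ℝ := (Fintype.card V : ℝ) with hn
  set Sd : ℝ := ∑ i, d i with hSd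
  set Sdd : ℝ := ∑ i, d i ^ 2 with hSdd
  set A : ℝ := ∑ i, ψ.1 i with hA
  set B : ℝ := ∑ i, ψ.1 i * d i with hB
  have hD : 0 < n * Sdd - Sd ^ 2 := det_pos d i0 j0 hdij
  have hDne : n * Sdd - Sd ^ 2 ≠ 0 := ne_of_gt hD
  have hnpos : 0 < n := by
    have : 0 < Fintype.card V := Fintype.card_pos_iff.mpr ⟨i0⟩
    rw [hn]
    exact_mod_cast this
  set γ0 : ℝ := (A * Sd - B * n) / (n * Sdd - Sd ^ 2) with hγ0
  set δ0 : ℝ := (A * Sdd - B * Sd) / (n * Sdd - Sd ^ 2) with hδ0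
  -- the orthogonality equations, for general (γ', δ'), characterize the minimizer
  have char : ∀ γ' δ' : ℝ,
      (∀ γ δ : ℝ, ∑ i : V, ((transform G ψ γ' δ').1 i) ^ 2
        ≤ ∑ i : V, ((transform G ψ γ' δ').1 i - γ * (G.degree i : ℝ) - δ) ^ 2)
      ↔ (B + γ' * Sdd - δ' * Sd = 0 ∧ A + γ' * Sd - δ' * n = 0) := by
    intro γ' δ'
    have ha : (transform G ψ γ' δ').1 = fun i => ψ.1 i + γ' * d i - δ' := rfl
    rw [ha, ls_char (fun i => ψ.1 i + γ' * d i - δ') d,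
      (sum_shift ψ.1 d γ' δ').1, (sum_shift ψ.1 d γ' δ').2]
  have eq1 : B + γ0 * Sdd - δ0 * Sd = 0 := by
    rw [hγ0, hδ0]; field_simp; ring
  have eq2 : A + γ0 * Sd - δ0 * n = 0 := by
    rw [hγ0, hδ0]; field_simp; ring
  refine ⟨transform G ψ γ0 δ0, ⟨⟨γ0, δ0, rfl⟩, (char γ0 δ0).mpr ⟨eq1, eq2⟩⟩, ?_⟩
  rintro q ⟨⟨γ', δ', rfl⟩, hmin⟩
  obtain ⟨h1', h2'⟩ := (char γ' δ').mp hmin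
  have hg : (γ' - γ0) * (n * Sdd - Sd ^ 2) = 0 := by
    linear_combination n * h1' - n * eq1 - Sd * h2' + Sd * eq2
  have hγeq : γ' = γ0 := by
    rcases mul_eq_zero.mp hg with h | h
    · linarith [sub_eq_zero.mp h]
    · exact absurd h hDne
  have hδeq : δ' = δ0 := by
    have hδn : (δ' - δ0) * n = 0 := by
      linear_combination eq2 - h2' + Sd * hγeq
    rcases mul_eq_zero.mp hδn with h | h
    · linarith [sub_eq_zero.mp h]
    · exact absurd h (ne_of_gt hnpos)
  rw [hγeq, hδeq]
end

section
/- The Gibbs distribution is invariant under the reparametrization (α_i, β_cp, β_ca) ↦ (α_i + γ·deg_{G*}(i), β_cp − γ, β_ca + γ) for any γ ∈ ℝ: both parameter tuples define exactly the same probability distribution on {0,1}^{V*}. -/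
open Finset Real

lemma sum_edges_vertsum {V : Type*} [Fintype V] [DecidableEq V] (G : SimpleGraph V)
    [DecidableRel G.Adj] (x : V → Bool) :
    ∑ e ∈ G.edgeFinset, Sym2.lift ⟨fun i j => ind (x i) + ind (x j), fun i j => by ring⟩ e =
      ∑ v, (G.degree v : ℝ) * ind (x v) := by
  have h1 : ∀ e ∈ G.edgeFinset,
      Sym2.lift ⟨fun i j => ind (x i) + ind (x j), fun i j => by ring⟩ e =
        ∑ v, if v ∈ e then ind (x v) else 0 := by
    intro e he
    induction e with
    | _ i j =>
      have hij : i ≠ j := by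
        intro h
        subst h
        exact (G.not_isDiag_of_mem_edgeSet (SimpleGraph.mem_edgeFinset.mp he)) rfl
      have hfilt : (Finset.univ.filter (· ∈ s(i, j))) = {i, j} := by
        ext v; simp [Sym2.mem_iff]
      rw [Sym2.lift_mk, ← Finset.sum_filter, hfilt, Finset.sum_pair hij]
  rw [Finset.sum_congr rfl h1, Finset.sum_comm]
  refine Finset.sum_congr rfl fun v _ => ?_
  rw [← Finset.sum_filter]
  have : ({e ∈ G.edgeFinset | v ∈ e} : Finset (Sym2 V)) = G.incidenceFinset v :=
    (G.incidenceFinset_eq_filter v).symm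
  rw [this, Finset.sum_const, G.card_incidenceFinset_eq_degree, nsmul_eq_mul]

lemma ca_cp_sum {V : Type*} [Fintype V] [DecidableEq V] (G : SimpleGraph V)
    [DecidableRel G.Adj] (x : V → Bool) :
    edgeCA G x - edgeCP G x + ∑ v, (G.degree v : ℝ) * ind (x v) =
      (G.edgeFinset.card : ℝ) := by
  rw [← sum_edges_vertsum G x]
  unfold edgeCA edgeCP
  rw [← Finset.sum_sub_distrib, ← Finset.sum_add_distrib]
  have : ∀ e ∈ G.edgeFinset,
      (Sym2.lift ⟨fun i j => (1 - ind (x i)) * (1 - ind (x j)), fun i j => by ring⟩ e -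
        Sym2.lift ⟨fun i j => ind (x i) * ind (x j), fun i j => by ring⟩ e) +
        Sym2.lift ⟨fun i j => ind (x i) + ind (x j), fun i j => by ring⟩ e = 1 := by
    intro e _
    induction e with
    | _ i j =>
      simp only [Sym2.lift_mk]
      ring
  rw [Finset.sum_congr rfl this, Finset.sum_const, nsmul_eq_mul, mul_one]

lemma energy_reparam {V : Type*} [Fintype V] [DecidableEq V] (G : SimpleGraph V)
    [DecidableRel G.Adj] (α : V → ℝ) (bcp bca γ : ℝ) (x : V → Bool) :
    energy G (fun i => α i + γ * (G.degree i : ℝ)) (bcp - γ) (bca + γ) x =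
      energy G α bcp bca x + γ * (G.edgeFinset.card : ℝ) := by
  have h := ca_cp_sum G x
  unfold energy
  have hsum : ∑ i, (α i + γ * (G.degree i : ℝ)) * ind (x i) =
      (∑ i, α i * ind (x i)) + γ * ∑ i, (G.degree i : ℝ) * ind (x i) := by
    rw [Finset.mul_sum, ← Finset.sum_add_distrib]
    exact Finset.sum_congr rfl fun i _ => by ring
  rw [hsum]
  linear_combination γ * h

/-- the Gibbs distribution is invariant under the reparametrization
`(α_i, β_cp, β_ca) ↦ (α_i + γ·deg(i), β_cp − γ, β_ca + γ)`. -/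
theorem gibbs_reparam_invariant {V : Type*} [Fintype V] [DecidableEq V]
    (G : SimpleGraph V) [DecidableRel G.Adj] (α : V → ℝ) (bcp bca γ : ℝ) :
    ∀ x : V → Bool,
      gibbs G α bcp bca x =
        gibbs G (fun i => α i + γ * (G.degree i : ℝ)) (bcp - γ) (bca + γ) x := by
  intro x
  unfold gibbs Zconst
  have hE : ∀ y : V → Bool,
      Real.exp (energy G (fun i => α i + γ * (G.degree i : ℝ)) (bcp - γ) (bca + γ) y) =
        Real.exp (energy G α bcp bca y) * Real.exp (γ * (G.edgeFinset.card : ℝ)) := by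
    intro y
    rw [energy_reparam, Real.exp_add]
  rw [hE x]
  have : ∑ y : V → Bool,
      Real.exp (energy G (fun i => α i + γ * (G.degree i : ℝ)) (bcp - γ) (bca + γ) y) =
        (∑ y : V → Bool, Real.exp (energy G α bcp bca y)) *
          Real.exp (γ * (G.edgeFinset.card : ℝ)) := by
    rw [Finset.sum_mul]
    exact Finset.sum_congr rfl fun y _ => hE y
  rw [this, mul_div_mul_right _ _ (Real.exp_ne_zero _)]
end
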